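/- arXiv:math/0311493 — 5 statements merged into one kernel-verified Lean document; each statement's English description precedes it below -/
import Mathlib

section
/- Laurent phenomenon for type A_1×A_1 style recurrence (b=c=1): every term y_t of the sequence defined by y_{t-1} y_{t+1} = y_t + 1 over the field Q(y_1, y_2) is a Laurent polynomial with integer coefficients in y_1 and y_2. -/
open MvPolynomial

/-- Laurent phenomenon for the rank-2 recurrence with `b = c = 1`: every term
of the sequence defined by `y_{t-1} y_{t+1} = y_t + 1` in the field
`ℚ(y₁, y₂)` is an integer-coefficient Laurent polynomial in `y₁, y₂`. -/
theorem laurent_phenomenon_rank_two {F : Type*} [Field F]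
    [Algebra (MvPolynomial (Fin 2) ℚ) F]
    [IsFractionRing (MvPolynomial (Fin 2) ℚ) F]
    (y : ℤ → F)
    (h1 : y 1 = algebraMap (MvPolynomial (Fin 2) ℚ) F (X 0))
    (h2 : y 2 = algebraMap (MvPolynomial (Fin 2) ℚ) F (X 1))
    (hrec : ∀ t : ℤ, y (t - 1) * y (t + 1) = y t + 1) :
    ∀ t : ℤ, ∃ (p : MvPolynomial (Fin 2) ℤ) (a b : ℕ),
      y t * y 1 ^ a * y 2 ^ b = MvPolynomial.aeval ![y 1, y 2] p := by
  have inj : Function.Injective (algebraMap (MvPolynomial (Fin 2) ℚ) F) :=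
    IsFractionRing.injective _ _
  set φ := algebraMap (MvPolynomial (Fin 2) ℚ) F with hφ
  set a := φ (X 0) with hadef
  set b := φ (X 1) with hbdef
  have hmapne : ∀ p : MvPolynomial (Fin 2) ℚ, p ≠ 0 → φ p ≠ 0 := by
    intro p hp h
    exact hp (inj (by simpa using h))
  have hne1 : (X 0 : MvPolynomial (Fin 2) ℚ) ≠ 0 := by
    intro h
    have := congrArg (eval fun _ => (1:ℚ)) h
    simp at this
  have hne2 : (X 1 : MvPolynomial (Fin 2) ℚ) ≠ 0 := by
    intro h
    have := congrArg (eval fun _ => (1:ℚ)) h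
    simp at this
  have hne3 : (X 0 + 1 : MvPolynomial (Fin 2) ℚ) ≠ 0 := by
    intro h
    have := congrArg (eval fun _ => (0:ℚ)) h
    simp at this
  have hne4 : (X 1 + 1 : MvPolynomial (Fin 2) ℚ) ≠ 0 := by
    intro h
    have := congrArg (eval fun _ => (0:ℚ)) h
    simp at this
  have hne5 : (X 0 + X 1 + 1 : MvPolynomial (Fin 2) ℚ) ≠ 0 := by
    intro h
    have := congrArg (eval fun _ => (0:ℚ)) h
    simp at this
  have ha : a ≠ 0 := hmapne _ hne1
  have hb : b ≠ 0 := hmapne _ hne2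
  have ha1 : a + 1 ≠ 0 := by
    have := hmapne _ hne3; simpa [map_add, map_one] using this
  have hb1 : b + 1 ≠ 0 := by
    have := hmapne _ hne4; simpa [map_add, map_one] using this
  have hab1 : a + b + 1 ≠ 0 := by
    have := hmapne _ hne5; simpa [map_add, map_one] using this
  -- The five periodic values
  set h : ZMod 5 → F := ![(a+1)/b, a, b, (b+1)/a, (a+b+1)/(a*b)] with hh
  have hnz : ∀ z : ZMod 5, h z ≠ 0 := by
    intro z
    fin_cases z <;>
      simp only [hh, Matrix.cons_val_zero, Matrix.cons_val_one, Matrix.head_cons,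
        Matrix.cons_val_two, Matrix.tail_cons, Matrix.cons_val_three,
        Matrix.cons_val_four] <;>
      first
        | exact div_ne_zero ha1 hb
        | exact ha
        | exact hb
        | exact div_ne_zero hb1 ha
        | exact div_ne_zero hab1 (mul_ne_zero ha hb)
  have e0 : h 0 = (a+1)/b := rfl
  have e1 : h 1 = a := rfl
  have e2 : h 2 = b := rfl
  have e3 : h 3 = (b+1)/a := rfl
  have e4 : h 4 = (a+b+1)/(a*b) := rfl
  have hid : ∀ z : ZMod 5, h z * h (z + 2) = h (z + 1) + 1 := by
    intro z
    fin_cases z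
    · show h 0 * h 2 = h 1 + 1
      rw [e0, e1, e2]; field_simp
    · show h 1 * h 3 = h 2 + 1
      rw [e1, e2, e3]; field_simp
    · show h 2 * h 4 = h 3 + 1
      rw [e2, e3, e4]; field_simp; ring
    · show h 3 * h 0 = h 4 + 1
      rw [e3, e0, e4]; field_simp; ring
    · show h 4 * h 1 = h 0 + 1
      rw [e4, e1, e0]; field_simp; ring
  -- main claim: y is given by h on residues mod 5
  have key : ∀ t : ℤ, y t = h ((t : ZMod 5)) ∧ y (t + 1) = h (((t + 1 : ℤ) : ZMod 5)) := by
    intro t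
    induction t using Int.induction_on with
    | zero =>
        constructor
        · have h0 := hrec 1
          norm_num at h0
          rw [h1, h2] at h0
          have hy0 : y 0 = (a + 1) / b := eq_div_of_mul_eq hb h0
          rw [hy0]
          exact e0.symm
        · rw [show ((0:ℤ) + 1) = 1 by ring, h1]
          exact e1.symm
    | succ n ih =>
        obtain ⟨ihl, ihr⟩ := ih
        refine ⟨by exact_mod_cast ihr, ?_⟩
        have hr := hrec ((n : ℤ) + 1)
        rw [show ((n:ℤ) + 1 - 1) = n by ring] at hr
        rw [ihl, ihr] at hr
        have hz := hid ((n : ℤ) : ZMod 5)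
        have c1 : (((n : ℤ) + 1 : ℤ) : ZMod 5) = ((n : ℤ) : ZMod 5) + 1 := by push_cast; ring
        have c2 : (((n : ℤ) + 1 + 1 : ℤ) : ZMod 5) = ((n : ℤ) : ZMod 5) + 2 := by push_cast; ring
        rw [c1] at hr
        rw [c2]
        exact mul_left_cancel₀ (hnz ((n : ℤ) : ZMod 5)) (hr.trans hz.symm)
    | pred n ih =>
        obtain ⟨ihl, ihr⟩ := ih
        constructor
        · have hr := hrec (-(n : ℤ))
          rw [ihl, ihr] at hr
          have e0 : ((-(n:ℤ) - 1 : ℤ) : ZMod 5) = ((-(n:ℤ) : ℤ) : ZMod 5) - 1 := by push_cast; ring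
          have hz := hid (((-(n:ℤ) : ℤ) : ZMod 5) - 1)
          rw [show ((-(n:ℤ) : ℤ) : ZMod 5) - 1 + 2 = ((-(n:ℤ) + 1 : ℤ) : ZMod 5) by push_cast; ring,
              show ((-(n:ℤ) : ℤ) : ZMod 5) - 1 + 1 = ((-(n:ℤ) : ℤ) : ZMod 5) by ring] at hz
          rw [show (-(n:ℤ) + 1 : ℤ) = -(n:ℤ) + 1 by ring] at hr
          rw [e0]
          have hnz2 := hnz ((-(n:ℤ) + 1 : ℤ) : ZMod 5)
          have : y (-(n:ℤ) - 1) * h ((-(n:ℤ) + 1 : ℤ) : ZMod 5)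
              = h (((-(n:ℤ) : ℤ) : ZMod 5) - 1) * h ((-(n:ℤ) + 1 : ℤ) : ZMod 5) := by
            rw [hr, hz]
          exact mul_right_cancel₀ hnz2 this
        · rw [show (-((n:ℕ):ℤ) - 1 + 1 : ℤ) = -(n:ℤ) by ring]
          exact ihl
  -- conclude
  intro t
  have hyt := (key t).1
  rw [h1, h2]
  generalize hzz : ((t : ℤ) : ZMod 5) = z at hyt
  fin_cases z
  · refine ⟨X 0 + 1, 0, 1, ?_⟩
    rw [hyt.trans e0]
    simp only [map_add, map_one, aeval_X, Matrix.cons_val_zero, pow_zero, pow_one, e0]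
    field_simp
  · refine ⟨X 0, 0, 0, ?_⟩
    rw [hyt.trans e1]
    simp [e1]
  · refine ⟨X 1, 0, 0, ?_⟩
    rw [hyt.trans e2]
    simp [e2]
  · refine ⟨X 1 + 1, 1, 0, ?_⟩
    rw [hyt.trans e3]
    simp only [map_add, map_one, aeval_X, Matrix.cons_val_one, Matrix.head_cons,
      pow_zero, pow_one, e3]
    field_simp
    simp
  · refine ⟨X 0 + X 1 + 1, 1, 1, ?_⟩
    rw [hyt.trans e4]
    simp only [map_add, map_one, aeval_X, Matrix.cons_val_zero, Matrix.cons_val_one,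
      Matrix.head_cons, pow_one, e4]
    field_simp
end

section
/- The rank-2 cluster recurrence with bc=2 is 6-periodic: if y_1, y_2 are nonzero elements of a field and y_{t-1} y_{t+1} = y_t^2 + 1 for t odd, y_{t-1} y_{t+1} = y_t + 1 for t even (all terms nonzero), then y_{t+6} = y_t for all t. -/
private lemma key_even {F : Type*} [Field F] (a b c d e f g : F)
    (ha : a ≠ 0) (hb : b ≠ 0) (hc : c ≠ 0) (hd : d ≠ 0) (he : e ≠ 0)
    (E1 : a * c = b ^ 2 + 1) (E2 : b * d = c + 1) (E3 : c * e = d ^ 2 + 1)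
    (E4 : d * f = e + 1) (E5 : e * g = f ^ 2 + 1) : g = a := by
  have hd2 : a * b * d = a + b ^ 2 + 1 := by linear_combination a * E2 + E1
  have he2 : a * b ^ 2 * e = (a + 1) ^ 2 + b ^ 2 := by
    have h : (a * c) * (a * b ^ 2 * e) = (a * c) * ((a + 1) ^ 2 + b ^ 2) := by
      linear_combination a ^ 2 * b ^ 2 * E3 + (a * b * d + a + b ^ 2 + 1) * hd2
        - ((a + 1) ^ 2 + b ^ 2) * E1
    exact mul_left_cancel₀ (mul_ne_zero ha hc) h
  have hf2 : b * f = a + 1 := by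
    have h : (a * b * d) * (b * f) = (a * b * d) * (a + 1) := by
      linear_combination a * b ^ 2 * E4 + he2 - (a + 1) * hd2
    exact mul_left_cancel₀ (mul_ne_zero (mul_ne_zero ha hb) hd) h
  have h : (a * b ^ 2 * e) * g = (a * b ^ 2 * e) * a := by
    linear_combination a * b ^ 2 * E5 + a * (b * f + a + 1) * hf2 - a * he2
  exact mul_left_cancel₀ (mul_ne_zero (mul_ne_zero ha (pow_ne_zero 2 hb)) he) h

private lemma key_odd {F : Type*} [Field F] (a b c d e f g : F)
    (ha : a ≠ 0) (hb : b ≠ 0) (hc : c ≠ 0) (hd : d ≠ 0) (he : e ≠ 0)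
    (E1 : a * c = b + 1) (E2 : b * d = c ^ 2 + 1) (E3 : c * e = d + 1)
    (E4 : d * f = e ^ 2 + 1) (E5 : e * g = f + 1) : g = a := by
  have hd2 : a ^ 2 * b * d = (b + 1) ^ 2 + a ^ 2 := by
    linear_combination a ^ 2 * E2 + (a * c + b + 1) * E1
  have he2 : a * b * e = b + 1 + a ^ 2 := by
    have h : (a * c) * (a * b * e) = (a * c) * (b + 1 + a ^ 2) := by
      linear_combination a ^ 2 * b * E3 + hd2 - (b + 1 + a ^ 2) * E1
    exact mul_left_cancel₀ (mul_ne_zero ha hc) h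
  have hf2 : b * f = a ^ 2 + 1 := by
    have h : (a ^ 2 * b * d) * (b * f) = (a ^ 2 * b * d) * (a ^ 2 + 1) := by
      linear_combination a ^ 2 * b ^ 2 * E4 + (a * b * e + b + 1 + a ^ 2) * he2
        - (a ^ 2 + 1) * hd2
    exact mul_left_cancel₀ (mul_ne_zero (mul_ne_zero (pow_ne_zero 2 ha) hb) hd) h
  have h : (a * b ^ 2 * e) * g = (a * b ^ 2 * e) * a := by
    linear_combination a * b ^ 2 * E5 + a * b * hf2 - a * b * he2
  exact mul_left_cancel₀ (mul_ne_zero (mul_ne_zero ha (pow_ne_zero 2 hb)) he) h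

/-- The rank-2 cluster recurrence with `bc = 2` (exponent 2 at odd `t`,
exponent 1 at even `t`) is 6-periodic. -/
theorem rank_two_bc_two_period_six {F : Type*} [Field F]
    (y : ℤ → F) (hne : ∀ t, y t ≠ 0)
    (hodd : ∀ t : ℤ, Odd t → y (t - 1) * y (t + 1) = y t ^ 2 + 1)
    (heven : ∀ t : ℤ, Even t → y (t - 1) * y (t + 1) = y t + 1) :
    ∀ t : ℤ, y (t + 6) = y t := by
  intro t
  rcases Int.even_or_odd t with ⟨k, hk⟩ | ⟨k, hk⟩
  · have h1 := hodd (t + 1) ⟨k, by omega⟩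
    have h2 := heven (t + 2) ⟨k + 1, by omega⟩
    have h3 := hodd (t + 3) ⟨k + 1, by omega⟩
    have h4 := heven (t + 4) ⟨k + 2, by omega⟩
    have h5 := hodd (t + 5) ⟨k + 2, by omega⟩
    simp only [show t + 1 - 1 = t by ring, show t + 1 + 1 = t + 2 by ring,
      show t + 2 - 1 = t + 1 by ring, show t + 2 + 1 = t + 3 by ring,
      show t + 3 - 1 = t + 2 by ring, show t + 3 + 1 = t + 4 by ring,
      show t + 4 - 1 = t + 3 by ring, show t + 4 + 1 = t + 5 by ring,
      show t + 5 - 1 = t + 4 by ring, show t + 5 + 1 = t + 6 by ring] at h1 h2 h3 h4 h5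
    exact key_even (y t) (y (t+1)) (y (t+2)) (y (t+3)) (y (t+4)) (y (t+5)) (y (t+6))
      (hne t) (hne _) (hne _) (hne _) (hne _) h1 h2 h3 h4 h5
  · have h1 := heven (t + 1) ⟨k + 1, by omega⟩
    have h2 := hodd (t + 2) ⟨k + 1, by omega⟩
    have h3 := heven (t + 3) ⟨k + 2, by omega⟩
    have h4 := hodd (t + 4) ⟨k + 2, by omega⟩
    have h5 := heven (t + 5) ⟨k + 3, by omega⟩
    simp only [show t + 1 - 1 = t by ring, show t + 1 + 1 = t + 2 by ring,
      show t + 2 - 1 = t + 1 by ring, show t + 2 + 1 = t + 3 by ring,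
      show t + 3 - 1 = t + 2 by ring, show t + 3 + 1 = t + 4 by ring,
      show t + 4 - 1 = t + 3 by ring, show t + 4 + 1 = t + 5 by ring,
      show t + 5 - 1 = t + 4 by ring, show t + 5 + 1 = t + 6 by ring] at h1 h2 h3 h4 h5
    exact key_odd (y t) (y (t+1)) (y (t+2)) (y (t+3)) (y (t+4)) (y (t+5)) (y (t+6))
      (hne t) (hne _) (hne _) (hne _) (hne _) h1 h2 h3 h4 h5
end

section
/- The rank-2 cluster recurrence with bc=3 is 8-periodic: if y_1, y_2 are nonzero elements of a field and y_{t-1} y_{t+1} = y_t^3 + 1 for t odd, y_{t-1} y_{t+1} = y_t + 1 for t even (all terms nonzero), then y_{t+8} = y_t for all t. -/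
/-- Key lemma: starting at an even index, the sequence repeats after 8 steps,
for both the even and the following odd index. -/
lemma rank_two_bc_three_key {F : Type*} [Field F]
    (y : ℤ → F) (hne : ∀ t, y t ≠ 0)
    (hodd : ∀ t : ℤ, Odd t → y (t - 1) * y (t + 1) = y t ^ 3 + 1)
    (heven : ∀ t : ℤ, Even t → y (t - 1) * y (t + 1) = y t + 1)
    (t : ℤ) (ht : Even t) :
    y (t + 8) = y t ∧ y (t + 9) = y (t + 1) := by
  obtain ⟨k, hk⟩ := ht
  set a := y t with ha'
  set b := y (t + 1) with hb'
  have ha : a ≠ 0 := hne t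
  have hb : b ≠ 0 := hne (t + 1)
  -- parity facts
  have p1 : Odd (t + 1) := ⟨k, by omega⟩
  have p2 : Even (t + 2) := ⟨k + 1, by omega⟩
  have p3 : Odd (t + 3) := ⟨k + 1, by omega⟩
  have p4 : Even (t + 4) := ⟨k + 2, by omega⟩
  have p5 : Odd (t + 5) := ⟨k + 2, by omega⟩
  have p6 : Even (t + 6) := ⟨k + 3, by omega⟩
  have p7 : Odd (t + 7) := ⟨k + 3, by omega⟩
  have p8 : Even (t + 8) := ⟨k + 4, by omega⟩
  -- the recurrence instances
  have h1 := hodd (t + 1) p1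
  rw [show t + 1 - 1 = t by ring, show t + 1 + 1 = t + 2 by ring] at h1
  have h2 := heven (t + 2) p2
  rw [show t + 2 - 1 = t + 1 by ring, show t + 2 + 1 = t + 3 by ring] at h2
  have h3 := hodd (t + 3) p3
  rw [show t + 3 - 1 = t + 2 by ring, show t + 3 + 1 = t + 4 by ring] at h3
  have h4 := heven (t + 4) p4
  rw [show t + 4 - 1 = t + 3 by ring, show t + 4 + 1 = t + 5 by ring] at h4
  have h5 := hodd (t + 5) p5
  rw [show t + 5 - 1 = t + 4 by ring, show t + 5 + 1 = t + 6 by ring] at h5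
  have h6 := heven (t + 6) p6
  rw [show t + 6 - 1 = t + 5 by ring, show t + 6 + 1 = t + 7 by ring] at h6
  have h7 := hodd (t + 7) p7
  rw [show t + 7 - 1 = t + 6 by ring, show t + 7 + 1 = t + 8 by ring] at h7
  have h8 := heven (t + 8) p8
  rw [show t + 8 - 1 = t + 7 by ring, show t + 8 + 1 = t + 9 by ring] at h8
  -- step 3
  have e3 : y (t + 2) = (b ^ 3 + 1) / a := by
    rw [eq_div_iff ha]; linear_combination h1
  have hB1 : b ^ 3 + 1 ≠ 0 := by
    intro h; exact hne (t + 2) (by rw [e3, h, zero_div])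
  -- step 4
  have e4 : y (t + 3) = (b ^ 3 + a + 1) / (a * b) := by
    rw [eq_div_iff (mul_ne_zero ha hb)]
    have : y (t + 3) = (y (t + 2) + 1) / b := by
      rw [eq_div_iff hb]; linear_combination h2
    rw [this, e3]; field_simp; ring
  have hA1 : b ^ 3 + a + 1 ≠ 0 := by
    intro h; exact hne (t + 3) (by rw [e4, h, zero_div])
  -- step 5
  have e5 : y (t + 4) =
      ((b ^ 3 + 1) ^ 2 + 3 * a * (b ^ 3 + 1) + a ^ 2 * (a + 3)) / (a ^ 2 * b ^ 3) := by
    have : y (t + 4) = (y (t + 3) ^ 3 + 1) / y (t + 2) := by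
      rw [eq_div_iff (hne (t + 2))]; linear_combination h3
    rw [this, e3, e4]
    field_simp
    ring
  have hN5 : (b ^ 3 + 1) ^ 2 + 3 * a * (b ^ 3 + 1) + a ^ 2 * (a + 3) ≠ 0 := by
    intro h; exact hne (t + 4) (by rw [e5, h, zero_div])
  -- step 6
  have e6 : y (t + 5) = (b ^ 3 + (a + 1) ^ 2) / (a * b ^ 2) := by
    have : y (t + 5) = (y (t + 4) + 1) / y (t + 3) := by
      rw [eq_div_iff (hne (t + 3))]; linear_combination h4
    rw [this, e4, e5]
    field_simp
    ring
  have hB2 : b ^ 3 + (a + 1) ^ 2 ≠ 0 := by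
    intro h; exact hne (t + 5) (by rw [e6, h, zero_div])
  -- step 7
  have e7 : y (t + 6) = (b ^ 3 + (a + 1) ^ 3) / (a * b ^ 3) := by
    have : y (t + 6) = (y (t + 5) ^ 3 + 1) / y (t + 4) := by
      rw [eq_div_iff (hne (t + 4))]; linear_combination h5
    rw [this, e5, e6]
    rw [div_div_eq_mul_div, div_eq_div_iff hN5 (mul_ne_zero ha (pow_ne_zero 3 hb))]
    field_simp
    ring
  have hB3 : b ^ 3 + (a + 1) ^ 3 ≠ 0 := by
    intro h; exact hne (t + 6) (by rw [e7, h, zero_div])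
  -- step 8
  have e8 : y (t + 7) = (a + 1) / b := by
    have : y (t + 7) = (y (t + 6) + 1) / y (t + 5) := by
      rw [eq_div_iff (hne (t + 5))]; linear_combination h6
    rw [this, e6, e7]
    field_simp
    ring
  have ha1 : a + 1 ≠ 0 := by
    intro h; exact hne (t + 7) (by rw [e8, h, zero_div])
  -- step 9
  have e9 : y (t + 8) = a := by
    have : y (t + 8) = (y (t + 7) ^ 3 + 1) / y (t + 6) := by
      rw [eq_div_iff (hne (t + 6))]; linear_combination h7
    rw [this, e7, e8]
    field_simp
    ring
  -- step 10
  have e10 : y (t + 9) = b := by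
    have : y (t + 9) = (y (t + 8) + 1) / y (t + 7) := by
      rw [eq_div_iff (hne (t + 7))]; linear_combination h8
    rw [this, e8, e9]
    field_simp
  exact ⟨e9, e10⟩

/-- The rank-2 cluster recurrence with `bc = 3` (exponent 3 at odd `t`,
exponent 1 at even `t`) is 8-periodic. -/
theorem rank_two_bc_three_period_eight {F : Type*} [Field F]
    (y : ℤ → F) (hne : ∀ t, y t ≠ 0)
    (hodd : ∀ t : ℤ, Odd t → y (t - 1) * y (t + 1) = y t ^ 3 + 1)
    (heven : ∀ t : ℤ, Even t → y (t - 1) * y (t + 1) = y t + 1) :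
    ∀ t : ℤ, y (t + 8) = y t := by
  intro t
  rcases Int.even_or_odd t with ht | ht
  · exact (rank_two_bc_three_key y hne hodd heven t ht).1
  · obtain ⟨k, hk⟩ := ht
    have h := (rank_two_bc_three_key y hne hodd heven (t - 1) ⟨k, by omega⟩).2
    rw [show t - 1 + 9 = t + 8 by ring, show t - 1 + 1 = t by ring] at h
    exact h
end

section
/- For bc ≥ 4, the rank-2 cluster recurrence applied to independent indeterminates y_1, y_2 is not periodic: the sequence (y_t) in Q(y_1,y_2) defined by y_{t-1}y_{t+1} = y_t^b + 1 for t odd and y_{t-1}y_{t+1} = y_t^c + 1 for t even contains infinitely many distinct elements. -/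
open MvPolynomial

noncomputable section
namespace RankTwoAux

abbrev L : Type := LaurentSeries (RatFunc ℚ)

def uu : L := HahnSeries.single (-1 : ℤ) 1
def vv (b : ℕ) : L := HahnSeries.single (-(b : ℤ)) (RatFunc.X)

def km (b : ℕ) (m : Fin 2 →₀ ℕ) : ℤ := -(m 0 : ℤ) - (b : ℤ) * (m 1 : ℤ)

lemma aeval_monomial_single (b : ℕ) (m : Fin 2 →₀ ℕ) (q : ℚ) :
    aeval ![uu, vv b] (monomial m q)
      = HahnSeries.single (km b m)
          ((algebraMap ℚ (RatFunc ℚ) q) * RatFunc.X ^ (m 1)) := by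
  rw [aeval_monomial]
  rw [Finsupp.prod_fintype _ _ (fun i => pow_zero _)]
  rw [Fin.prod_univ_two]
  simp only [Matrix.cons_val_zero, Matrix.cons_val_one, Matrix.head_cons, uu, vv]
  have halg : (algebraMap ℚ L) = (HahnSeries.C : RatFunc ℚ →+* L).comp (algebraMap ℚ (RatFunc ℚ)) :=
    Subsingleton.elim _ _
  rw [halg, RingHom.comp_apply,
    HahnSeries.C_apply, HahnSeries.single_pow, HahnSeries.single_pow,
    HahnSeries.single_mul_single, HahnSeries.single_mul_single]
  rw [one_pow, one_mul]
  congr 1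
  simp only [km, smul_eq_mul, nsmul_eq_mul]
  push_cast
  ring_nf

lemma psi_injective (b : ℕ) :
    Function.Injective (aeval ![uu, vv b] : MvPolynomial (Fin 2) ℚ →ₐ[ℚ] L) := by
  rw [injective_iff_map_eq_zero]
  intro P hP
  rw [MvPolynomial.ext_iff]
  intro m'
  rw [coeff_zero]
  by_cases hm' : m' ∈ P.support
  swap
  · exact notMem_support_iff.mp hm'
  have hPsum : aeval ![uu, vv b] P = ∑ m ∈ P.support,
      HahnSeries.single (km b m)
        ((algebraMap ℚ (RatFunc ℚ) (coeff m P)) * RatFunc.X ^ (m 1)) := by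
    conv_lhs => rw [P.as_sum]
    rw [map_sum]
    exact Finset.sum_congr rfl fun m _ => aeval_monomial_single b m _
  rw [hPsum] at hP
  have hcoeff := congrArg (HahnSeries.coeff.addMonoidHom (R := RatFunc ℚ) (km b m')) hP
  rw [map_sum, map_zero] at hcoeff
  simp only [HahnSeries.coeff.addMonoidHom, AddMonoidHom.coe_mk, ZeroHom.coe_mk,
    HahnSeries.coeff_single] at hcoeff
  -- rewrite each summand as image of a polynomial
  have hpoly : ∑ m ∈ P.support,
      (if km b m' = km b m then Polynomial.C (coeff m P) * Polynomial.X ^ (m 1) else 0)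
      = (0 : Polynomial ℚ) := by
    apply RatFunc.algebraMap_injective ℚ
    rw [map_sum, map_zero]
    rw [← hcoeff]
    refine Finset.sum_congr rfl fun m _ => ?_
    split_ifs with h
    · rw [map_mul, map_pow, RatFunc.algebraMap_C, RatFunc.algebraMap_X]
      have hCeq : (RatFunc.C : ℚ →+* RatFunc ℚ) = algebraMap ℚ (RatFunc ℚ) :=
        Subsingleton.elim _ _
      rw [hCeq]
    · rw [map_zero]
  have hc := congrArg (fun p : Polynomial ℚ => p.coeff (m' 1)) hpoly
  simp only [Polynomial.finset_sum_coeff, Polynomial.coeff_zero] at hc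
  rw [Finset.sum_eq_single_of_mem m' hm'] at hc
  · simpa using hc
  · intro m hm hne
    split_ifs with h
    · rw [Polynomial.coeff_C_mul, Polynomial.coeff_X_pow]
      rcases eq_or_ne (m 1) (m' 1) with h1 | h1
      · exfalso
        apply hne
        have h0 : m 0 = m' 0 := by
          simp only [km, h1] at h
          omega
        ext i
        fin_cases i
        · exact h0.symm ▸ rfl
        · exact h1.symm ▸ rfl
      · simp only [if_neg (fun hh : m' 1 = m 1 => h1 hh.symm), mul_zero]
    · simp [Polynomial.coeff_zero, apply_ite (fun p : Polynomial ℚ => p.coeff (m' 1))]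

lemma add_one_order {w : L} (a : ℕ) (hw : w ≠ 0) (hwo : (a : ℤ) * w.order < 0) :
    w ^ a + 1 ≠ 0 ∧ (w ^ a + 1).order = (a : ℤ) * w.order := by
  have hwa : w ^ a ≠ 0 := pow_ne_zero _ hw
  have hor : (w ^ a).order = (a : ℤ) * w.order := by
    rw [HahnSeries.order_pow]; simp [nsmul_eq_mul]
  have hlt : (w ^ a).orderTop < (1 : L).orderTop := by
    rw [← HahnSeries.order_eq_orderTop_of_ne_zero hwa,
      ← HahnSeries.order_eq_orderTop_of_ne_zero (one_ne_zero : (1 : L) ≠ 0)]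
    rw [hor, HahnSeries.order_one]
    exact_mod_cast hwo
  have hN := HahnSeries.orderTop_add_eq_left hlt
  have hNne : w ^ a + 1 ≠ 0 := by
    rw [← HahnSeries.orderTop_ne_top, hN]
    exact HahnSeries.orderTop_ne_top.mpr hwa
  refine ⟨hNne, ?_⟩
  rw [← HahnSeries.order_eq_orderTop_of_ne_zero hNne,
    ← HahnSeries.order_eq_orderTop_of_ne_zero hwa] at hN
  rw [WithTop.coe_inj] at hN
  rw [hN, hor]

lemma inv_step {b c e f : ℤ} (hb : 1 ≤ b) (hc : 1 ≤ c) (hbc : 4 ≤ b * c)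
    (h1 : 1 ≤ e) (h2 : 1 ≤ f) (h3 : 2 * e + 1 ≤ c * f)
    (h4 : 2 * f + 1 ≤ b * (c * f - e)) :
    1 ≤ c * f - e ∧ 1 ≤ b * (c * f - e) - f ∧
      2 * (c * f - e) + 1 ≤ c * (b * (c * f - e) - f) ∧
      2 * (b * (c * f - e) - f) + 1
        ≤ b * (c * (b * (c * f - e) - f) - (c * f - e)) := by
  set e' : ℤ := c * f - e with he'
  set f' : ℤ := b * e' - f with hf'
  have he1 : 1 ≤ e' := by linarith
  have hf1 : 1 ≤ f' := by linarith
  have hc3 : 2 * e' + 1 ≤ c * f' := by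
    have k0 : c * (2 * f + 1) ≤ c * (b * e') :=
      mul_le_mul_of_nonneg_left h4 (by linarith)
    have k1 : (b * c - 4) * e' ≥ 0 := by
      apply mul_nonneg <;> linarith
    have k2 : 2 * e' < c * f' := by nlinarith
    exact Int.add_one_le_iff.mpr k2
  refine ⟨he1, hf1, hc3, ?_⟩
  have k0 : b * (2 * e' + 1) ≤ b * (c * f') :=
    mul_le_mul_of_nonneg_left hc3 (by linarith)
  have k1 : (b * c - 4) * f' ≥ 0 := by
    apply mul_nonneg <;> linarith
  have k2 : 2 * f' < b * (c * f' - e') := by nlinarith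
  exact Int.add_one_le_iff.mpr k2

def ef (b c : ℕ) : ℕ → ℤ × ℤ
  | 0 => (1, (b : ℤ))
  | k + 1 =>
    let p := ef b c k
    (c * p.2 - p.1, (b : ℤ) * ((c : ℤ) * p.2 - p.1) - p.2)

lemma ef_inv (b c : ℕ) (hb : 1 ≤ b) (hc : 1 ≤ c) (hbc : 4 ≤ b * c) (k : ℕ) :
    1 ≤ (ef b c k).1 ∧ 1 ≤ (ef b c k).2 ∧
      2 * (ef b c k).1 + 1 ≤ c * (ef b c k).2 ∧
      2 * (ef b c k).2 + 1 ≤ b * (c * (ef b c k).2 - (ef b c k).1) := by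
  have hb' : (1 : ℤ) ≤ (b : ℤ) := by exact_mod_cast hb
  have hc' : (1 : ℤ) ≤ (c : ℤ) := by exact_mod_cast hc
  have hbc' : (4 : ℤ) ≤ (b : ℤ) * c := by exact_mod_cast hbc
  induction k with
  | zero =>
    refine ⟨le_refl _, hb', ?_, ?_⟩
    · simp only [ef]; nlinarith
    · simp only [ef]; nlinarith
  | succ k ih =>
    obtain ⟨i1, i2, i3, i4⟩ := ih
    have := inv_step hb' hc' hbc' i1 i2 i3 i4
    simpa only [ef] using this

lemma ef_fst_strictMono (b c : ℕ) (hb : 1 ≤ b) (hc : 1 ≤ c) (hbc : 4 ≤ b * c) :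
    StrictMono (fun k => (ef b c k).1) := by
  apply strictMono_nat_of_lt_succ
  intro k
  obtain ⟨i1, i2, i3, i4⟩ := ef_inv b c hb hc hbc k
  show (ef b c k).1 < (c : ℤ) * (ef b c k).2 - (ef b c k).1
  linarith

end RankTwoAux
end

open RankTwoAux

/-- For `bc ≥ 4`, the rank-2 cluster recurrence applied to independent
indeterminates `y₁, y₂` over `ℚ` is not periodic: the sequence takes
infinitely many distinct values in `ℚ(y₁, y₂)`. -/
theorem rank_two_bc_ge_four_infinite {F : Type*} [Field F]
    [Algebra (MvPolynomial (Fin 2) ℚ) F]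
    [IsFractionRing (MvPolynomial (Fin 2) ℚ) F]
    (b c : ℕ) (hb : 1 ≤ b) (hc : 1 ≤ c) (hbc : 4 ≤ b * c)
    (y : ℤ → F)
    (h1 : y 1 = algebraMap (MvPolynomial (Fin 2) ℚ) F (X 0))
    (h2 : y 2 = algebraMap (MvPolynomial (Fin 2) ℚ) F (X 1))
    (hodd : ∀ t : ℤ, Odd t → y (t - 1) * y (t + 1) = y t ^ b + 1)
    (heven : ∀ t : ℤ, Even t → y (t - 1) * y (t + 1) = y t ^ c + 1) :
    (Set.range y).Infinite := by
  classical
  have hinj : Function.Injective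
      ((aeval ![uu, vv b] : MvPolynomial (Fin 2) ℚ →ₐ[ℚ] L) :
        MvPolynomial (Fin 2) ℚ → L) := psi_injective b
  set ψ : MvPolynomial (Fin 2) ℚ →+* L :=
    (aeval ![uu, vv b] : MvPolynomial (Fin 2) ℚ →ₐ[ℚ] L).toRingHom with hψ
  have hinj' : Function.Injective ψ := hinj
  set φ : F →+* L := IsFractionRing.lift hinj' with hφ
  set z : ℤ → L := fun t => φ (y t) with hzdef
  have hz1 : z 1 = uu := by
    show φ (y 1) = uu
    rw [h1, hφ, IsFractionRing.lift_algebraMap]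
    show (aeval ![uu, vv b]) (X 0) = uu
    simp
  have hz2 : z 2 = vv b := by
    show φ (y 2) = vv b
    rw [h2, hφ, IsFractionRing.lift_algebraMap]
    show (aeval ![uu, vv b]) (X 1) = vv b
    simp
  have hE : ∀ s : ℤ, z (2 * s + 1) * z (2 * s + 3) = z (2 * s + 2) ^ c + 1 := by
    intro s
    have h := heven (2 * s + 2) ⟨s + 1, by ring⟩
    rw [show 2 * s + 2 - 1 = 2 * s + 1 by ring,
      show 2 * s + 2 + 1 = 2 * s + 3 by ring] at h
    have h' := congrArg φ h
    simp only [map_mul, map_add, map_pow, map_one] at h'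
    exact h'
  have hO : ∀ s : ℤ, z (2 * s + 2) * z (2 * s + 4) = z (2 * s + 3) ^ b + 1 := by
    intro s
    have h := hodd (2 * s + 3) ⟨s + 1, by ring⟩
    rw [show 2 * s + 3 - 1 = 2 * s + 2 by ring,
      show 2 * s + 3 + 1 = 2 * s + 4 by ring] at h
    have h' := congrArg φ h
    simp only [map_mul, map_add, map_pow, map_one] at h'
    exact h'
  have key : ∀ k : ℕ, z (2 * (k : ℤ) + 1) ≠ 0 ∧ z (2 * (k : ℤ) + 2) ≠ 0 ∧
      (z (2 * (k : ℤ) + 1)).order = -(ef b c k).1 ∧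
      (z (2 * (k : ℤ) + 2)).order = -(ef b c k).2 := by
    intro k
    induction k with
    | zero =>
      have e1 : (2 * ((0:ℕ) : ℤ) + 1) = 1 := by norm_num
      have e2 : (2 * ((0:ℕ) : ℤ) + 2) = 2 := by norm_num
      rw [e1, e2, hz1, hz2]
      refine ⟨HahnSeries.single_ne_zero one_ne_zero,
        HahnSeries.single_ne_zero RatFunc.X_ne_zero, ?_, ?_⟩
      · rw [show (ef b c 0).1 = 1 from rfl]
        exact HahnSeries.order_single one_ne_zero
      · rw [show (ef b c 0).2 = (b:ℤ) from rfl]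
        exact HahnSeries.order_single RatFunc.X_ne_zero
    | succ k ih =>
      obtain ⟨hx, hw, hxo, hwo⟩ := ih
      obtain ⟨i1, i2, i3, i4⟩ := ef_inv b c hb hc hbc k
      set e : ℤ := (ef b c k).1
      set f : ℤ := (ef b c k).2
      -- first step : t = 2k+2, exponent c
      have hcwo : (c : ℤ) * (z (2 * (k : ℤ) + 2)).order < 0 := by
        rw [hwo]
        have : (1:ℤ) ≤ (c:ℤ) := by exact_mod_cast hc
        nlinarith
      obtain ⟨hNne, hNo⟩ := add_one_order c hw hcwo
      have hrel := hE (k : ℤ)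
      have hr3ne : z (2 * (k : ℤ) + 3) ≠ 0 := by
        intro h0
        rw [h0, mul_zero] at hrel
        exact hNne hrel.symm
      have hr3o : (z (2 * (k : ℤ) + 3)).order = -(c * f - e) := by
        have := congrArg HahnSeries.order hrel
        rw [HahnSeries.order_mul hx hr3ne, hNo, hxo, hwo] at this
        linarith
      -- second step : t = 2k+3, exponent b
      have hbwo : (b : ℤ) * (z (2 * (k : ℤ) + 3)).order < 0 := by
        rw [hr3o]
        have hb' : (1:ℤ) ≤ (b:ℤ) := by exact_mod_cast hb
        nlinarith
      obtain ⟨hMne, hMo⟩ := add_one_order b hr3ne hbwo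
      have hrel2 := hO (k : ℤ)
      have hr4ne : z (2 * (k : ℤ) + 4) ≠ 0 := by
        intro h0
        rw [h0, mul_zero] at hrel2
        exact hMne hrel2.symm
      have hr4o : (z (2 * (k : ℤ) + 4)).order = -((b : ℤ) * (c * f - e) - f) := by
        have := congrArg HahnSeries.order hrel2
        rw [HahnSeries.order_mul hw hr4ne, hMo, hwo, hr3o] at this
        linarith
      have hidx1 : 2 * ((k : ℤ) + 1) + 1 = 2 * (k : ℤ) + 3 := by ring
      have hidx2 : 2 * ((k : ℤ) + 1) + 2 = 2 * (k : ℤ) + 4 := by ring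
      push_cast
      rw [hidx1, hidx2]
      exact ⟨hr3ne, hr4ne, by simpa only [ef] using hr3o, by simpa only [ef] using hr4o⟩
  -- conclude
  apply Set.infinite_of_injective_forall_mem
    (f := fun k : ℕ => y (2 * (k : ℤ) + 1))
  · intro j k hjk
    have hzeq : z (2 * (j : ℤ) + 1) = z (2 * (k : ℤ) + 1) := by
      show φ (y (2 * (j : ℤ) + 1)) = φ (y (2 * (k : ℤ) + 1))
      have hjk' : y (2 * (j : ℤ) + 1) = y (2 * (k : ℤ) + 1) := hjk
      rw [hjk']
    have := (key j).2.2.1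
    rw [hzeq, (key k).2.2.1] at this
    have heq : (ef b c j).1 = (ef b c k).1 := by linarith
    exact (ef_fst_strictMono b c hb hc hbc).injective heq
  · intro k
    exact Set.mem_range_self _
end

section
/- If a 3×3 real matrix x = (x_ij) with det(x)=1 has all minors nonnegative and the four minors x_13, x_31, Δ_{12,23}(x), Δ_{23,12}(x) are strictly positive, then all minors of x are strictly positive. -/
/-- The `2 × 2` minor of a `3 × 3` matrix with rows `i₁ < i₂` and
columns `j₁ < j₂`. -/
def minor2 (x : Matrix (Fin 3) (Fin 3) ℝ) (i₁ i₂ j₁ j₂ : Fin 3) : ℝ :=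
  x i₁ j₁ * x i₂ j₂ - x i₁ j₂ * x i₂ j₁

set_option maxHeartbeats 1600000 in
/-- If a `3 × 3` real matrix with determinant `1` is totally nonnegative
(all entries and all `2 × 2` minors are `≥ 0`) and the four minors
`x₁₃`, `x₃₁`, `Δ_{12,23}`, `Δ_{23,12}` are strictly positive, then the matrix
is totally positive: all minors are strictly positive. -/
theorem sl3_total_positivity_criterion (x : Matrix (Fin 3) (Fin 3) ℝ)
    (hdet : x.det = 1)
    (hent : ∀ i j, 0 ≤ x i j)
    (hmin : ∀ i₁ i₂ j₁ j₂ : Fin 3, i₁ < i₂ → j₁ < j₂ → 0 ≤ minor2 x i₁ i₂ j₁ j₂)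
    (h13 : 0 < x 0 2) (h31 : 0 < x 2 0)
    (h1223 : 0 < minor2 x 0 1 1 2) (h2312 : 0 < minor2 x 1 2 0 1) :
    (∀ i j, 0 < x i j) ∧
    (∀ i₁ i₂ j₁ j₂ : Fin 3, i₁ < i₂ → j₁ < j₂ → 0 < minor2 x i₁ i₂ j₁ j₂) ∧
    0 < x.det := by
  rw [Matrix.det_fin_three] at hdet
  simp only [minor2] at h1223 h2312
  have m0101 := hmin 0 1 0 1 (by decide) (by decide)
  have m0112 := hmin 0 1 1 2 (by decide) (by decide)
  have m0201 := hmin 0 2 0 1 (by decide) (by decide)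
  have m0212 := hmin 0 2 1 2 (by decide) (by decide)
  have m1201 := hmin 1 2 0 1 (by decide) (by decide)
  have m1212 := hmin 1 2 1 2 (by decide) (by decide)
  simp only [minor2] at m0101 m0112 m0201 m0212 m1201 m1212
  have e00 := hent 0 0; have e01 := hent 0 1; have e02 := hent 0 2
  have e10 := hent 1 0; have e11 := hent 1 1; have e12 := hent 1 2
  have e20 := hent 2 0; have e21 := hent 2 1; have e22 := hent 2 2
  -- entry positivity
  have pb : 0 < x 0 1 := by nlinarith [mul_nonneg e02 e11]
  have pf : 0 < x 1 2 := by nlinarith [mul_nonneg e02 e11]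
  have pd : 0 < x 1 0 := by nlinarith [mul_nonneg e11 e20]
  have ph : 0 < x 2 1 := by nlinarith [mul_nonneg e11 e20]
  have pa : 0 < x 0 0 := by nlinarith [mul_pos pb pd]
  have pe : 0 < x 1 1 := by nlinarith [mul_pos pb pd]
  have pi : 0 < x 2 2 := by nlinarith [mul_pos pf ph]
  -- the two principal 2×2 minors, via Dodgson condensation
  have dodg : (x 0 0 * x 1 1 - x 0 1 * x 1 0) * (x 1 1 * x 2 2 - x 1 2 * x 2 1)
      = x 1 1 + (x 0 1 * x 1 2 - x 0 2 * x 1 1) * (x 1 0 * x 2 1 - x 1 1 * x 2 0) := by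
    linear_combination x 1 1 * hdet
  have p0101 : 0 < x 0 0 * x 1 1 - x 0 1 * x 1 0 := by
    nlinarith [dodg, mul_pos h1223 h2312, pe, m1212]
  have p1212 : 0 < x 1 1 * x 2 2 - x 1 2 * x 2 1 := by
    nlinarith [dodg, mul_pos h1223 h2312, pe, m0101]
  -- the mixed minors, via three-term Plücker-type relations
  have p0102 : 0 < x 0 0 * x 1 2 - x 0 2 * x 1 0 := by
    have id1 : x 0 1 * (x 0 0 * x 1 2 - x 0 2 * x 1 0)
        = x 0 0 * (x 0 1 * x 1 2 - x 0 2 * x 1 1)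
          + x 0 2 * (x 0 0 * x 1 1 - x 0 1 * x 1 0) := by ring
    nlinarith [id1, mul_pos pa h1223, mul_pos h13 p0101, pb]
  have p0201 : 0 < x 0 0 * x 2 1 - x 0 1 * x 2 0 := by
    have id1 : x 1 0 * (x 0 0 * x 2 1 - x 0 1 * x 2 0)
        = x 0 0 * (x 1 0 * x 2 1 - x 1 1 * x 2 0)
          + x 2 0 * (x 0 0 * x 1 1 - x 0 1 * x 1 0) := by ring
    nlinarith [id1, mul_pos pa h2312, mul_pos h31 p0101, pd]
  have p0212 : 0 < x 0 1 * x 2 2 - x 0 2 * x 2 1 := by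
    have id1 : x 1 2 * (x 0 1 * x 2 2 - x 0 2 * x 2 1)
        = x 2 2 * (x 0 1 * x 1 2 - x 0 2 * x 1 1)
          + x 0 2 * (x 1 1 * x 2 2 - x 1 2 * x 2 1) := by ring
    nlinarith [id1, mul_pos pi h1223, mul_pos h13 p1212, pf]
  have p1202 : 0 < x 1 0 * x 2 2 - x 1 2 * x 2 0 := by
    have id1 : x 2 1 * (x 1 0 * x 2 2 - x 1 2 * x 2 0)
        = x 2 2 * (x 1 0 * x 2 1 - x 1 1 * x 2 0)
          + x 2 0 * (x 1 1 * x 2 2 - x 1 2 * x 2 1) := by ring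
    nlinarith [id1, mul_pos pi h2312, mul_pos h31 p1212, ph]
  have p0202 : 0 < x 0 0 * x 2 2 - x 0 2 * x 2 0 := by
    have id1 : x 1 1 * (x 0 0 * x 2 2 - x 0 2 * x 2 0)
        = 1 + x 1 2 * (x 0 0 * x 2 1 - x 0 1 * x 2 0)
          + x 1 0 * (x 0 1 * x 2 2 - x 0 2 * x 2 1) := by
      linear_combination hdet
    nlinarith [id1, mul_pos pf p0201, mul_pos pd p0212, pe]
  refine ⟨?_, ?_, by rw [Matrix.det_fin_three]; linarith⟩
  · intro i j
    fin_cases i <;> fin_cases j <;> assumption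
  · intro i₁ i₂ j₁ j₂ h₁ h₂
    fin_cases i₁ <;> fin_cases i₂ <;> fin_cases j₁ <;> fin_cases j₂ <;>
      simp only [minor2] <;>
      first
        | exact absurd h₁ (by decide)
        | exact absurd h₂ (by decide)
        | exact p0101 | exact p0102 | exact h1223
        | exact p0201 | exact p0202 | exact p0212
        | exact h2312 | exact p1202 | exact p1212
end
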